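/- arXiv:1507.08903 — 4 statements merged into one kernel-verified Lean document; each statement's English description precedes it below -/
import Mathlib

section
/- Let (ι_j)_{j≥1} be a strictly decreasing sequence of positive reals, let (T_j) be an increasing sequence of nonnegative reals, let λ > 0, c > 0, and V̄₁ ≥ c·ι₁. Define W(t) = (V̄₁ - c ι₁) e^{-λ t} + c ι_s + Σ_{j=1}^{s-1} c (ι_j - ι_{j+1}) e^{-λ(t - T_j)} for t in the s-th interval. Then W(T_s) < W(T_{s-1}) for every s ≥ 2. -/
/-- Monotone decrease of the bounding envelope across switching instants
(Theorem 1): `W_s(T_s) < W_{s-1}(T_{s-1})` for all `s ≥ 2`. -/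
theorem stmt_5 (ι T : ℕ → ℝ) (lam c V1 : ℝ) (hlam : 0 < lam) (hc : 0 < c)
    (hιpos : ∀ j, 1 ≤ j → 0 < ι j)
    (hιdec : ∀ j, 1 ≤ j → ι (j + 1) < ι j)
    (hT1 : 0 < T 1) (hTmono : ∀ j, 1 ≤ j → T j < T (j + 1))
    (hV1 : c * ι 1 ≤ V1)
    (W : ℕ → ℝ → ℝ)
    (hW : ∀ s t, W s t = (V1 - c * ι 1) * Real.exp (-lam * t) + c * ι s +
      ∑ j ∈ Finset.Icc 1 (s - 1), c * (ι j - ι (j + 1)) * Real.exp (-lam * (t - T j))) :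
    ∀ s, 2 ≤ s → W s (T s) < W (s - 1) (T (s - 1)) := by
  intro s hs
  obtain ⟨k, rfl⟩ : ∃ k, s = k + 2 := ⟨s - 2, by omega⟩
  rw [hW, hW]
  simp only [show k + 2 - 1 = k + 1 from rfl, show k + 1 - 1 = k from rfl]
  rw [Finset.sum_Icc_succ_top (by omega : 1 ≤ k + 1)]
  have hTlt : T (k + 1) < T (k + 2) := hTmono (k + 1) (by omega)
  have hA : 0 ≤ V1 - c * ι 1 := by linarith
  have hsum : ∑ j ∈ Finset.Icc 1 k, c * (ι j - ι (j + 1)) *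
      Real.exp (-lam * (T (k + 2) - T j)) ≤
      ∑ j ∈ Finset.Icc 1 k, c * (ι j - ι (j + 1)) *
      Real.exp (-lam * (T (k + 1) - T j)) := by
    apply Finset.sum_le_sum
    intro j hj
    have hj1 : 1 ≤ j := (Finset.mem_Icc.mp hj).1
    have hd := hιdec j hj1
    have hexp : Real.exp (-lam * (T (k + 2) - T j)) ≤
        Real.exp (-lam * (T (k + 1) - T j)) := by
      apply Real.exp_le_exp.mpr; nlinarith
    exact mul_le_mul_of_nonneg_left hexp (by nlinarith)
  have hfirst : (V1 - c * ι 1) * Real.exp (-lam * T (k + 2)) ≤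
      (V1 - c * ι 1) * Real.exp (-lam * T (k + 1)) := by
    apply mul_le_mul_of_nonneg_left _ hA
    apply Real.exp_le_exp.mpr; nlinarith
  have hmid : c * ι (k + 2) + c * (ι (k + 1) - ι (k + 1 + 1)) *
      Real.exp (-lam * (T (k + 2) - T (k + 1))) < c * ι (k + 1) := by
    have hd := hιdec (k + 1) (by omega)
    have he : Real.exp (-lam * (T (k + 2) - T (k + 1))) < 1 := by
      rw [← Real.exp_zero]; apply Real.exp_lt_exp.mpr; nlinarith
    have hkk : ι (k + 1 + 1) = ι (k + 2) := by norm_num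
    rw [hkk]
    nlinarith [mul_pos (mul_pos hc (sub_pos.mpr (hkk ▸ hd))) (sub_pos.mpr he)]
  linarith
end

section
/- Let λ, c > 0, V̄₁ > c ι₁ with ι₁ > 0, and let (ι_j)_{j=1}^s be decreasing positive reals with T_j ≥ jT for a dwell time T > 0 and all j ≤ s. If T ≥ max over j < s of (1/(λ(s-j))) log(s(ι_j - ι_{j+1})/ι_s) and T ≥ (1/(λ s)) log(s V̄₁/(c ι_s) - s ι₁/ι_s) (interpreting log of a nonpositive number as -∞ so the condition is vacuous), then (V̄₁ - c ι₁) e^{-λ s T} + c ι_s + Σ_{j=1}^{s-1} c (ι_j - ι_{j+1}) e^{-λ(s-j)T} ≤ 2 c ι_s. -/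
lemma aux_exp_bound (lam T m x : ℝ) (hlam : 0 < lam) (hm : 0 < m)
    (h : (1 / (lam * m)) * Real.log x ≤ T) : x ≤ Real.exp (lam * (m * T)) := by
  rcases le_or_gt x 0 with hx | hx
  · exact hx.trans (Real.exp_pos _).le
  · have hlm : 0 < lam * m := mul_pos hlam hm
    have hlog : Real.log x ≤ lam * (m * T) := by
      have h' : Real.log x / (lam * m) ≤ T := by
        rwa [one_div, inv_mul_eq_div] at h
      have := (div_le_iff₀ hlm).mp h'
      nlinarith
    calc x = Real.exp (Real.log x) := (Real.exp_log hx).symm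
      _ ≤ Real.exp (lam * (m * T)) := Real.exp_le_exp.mpr hlog

/-- Dwell-time computation in Theorem 2: under the stated lower bounds on the
dwell time `T`, the switched Lyapunov envelope at `T_s ≥ sT` is at most `2cι_s`. -/
theorem stmt_6 (ι : ℕ → ℝ) (lam c V1 T : ℝ) (s : ℕ) (hs : 2 ≤ s)
    (hlam : 0 < lam) (hc : 0 < c) (hT : 0 < T)
    (hιpos : ∀ j, 1 ≤ j → j ≤ s → 0 < ι j)
    (hιdec : ∀ j, 1 ≤ j → j ≤ s - 1 → ι (j + 1) ≤ ι j)
    (hV1 : c * ι 1 < V1)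
    (hdwell1 : ∀ j, 1 ≤ j → j ≤ s - 1 → ι (j + 1) < ι j →
      (1 / (lam * ((s : ℝ) - j))) * Real.log ((s : ℝ) * (ι j - ι (j + 1)) / ι s) ≤ T)
    (hdwell2 : (1 / (lam * s)) * Real.log ((s : ℝ) * V1 / (c * ι s) - (s : ℝ) * ι 1 / ι s) ≤ T) :
    (V1 - c * ι 1) * Real.exp (-lam * ((s : ℝ) * T)) + c * ι s +
        ∑ j ∈ Finset.Icc 1 (s - 1),
          c * (ι j - ι (j + 1)) * Real.exp (-lam * (((s : ℝ) - j) * T)) ≤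
      2 * c * ι s := by
  have hιs : 0 < ι s := hιpos s (by omega) le_rfl
  have hι1 : 0 < ι 1 := hιpos 1 le_rfl (by omega)
  have hsR : (0:ℝ) < s := by
    have : (2:ℝ) ≤ s := by exact_mod_cast hs
    linarith
  -- first term bound
  have hterm1 : (V1 - c * ι 1) * Real.exp (-lam * ((s : ℝ) * T)) ≤ c * ι s / s := by
    have hx1 : (s : ℝ) * V1 / (c * ι s) - (s : ℝ) * ι 1 / ι s
        = (s : ℝ) * (V1 - c * ι 1) / (c * ι s) := by
      field_simp
    rw [hx1] at hdwell2
    have h1 := aux_exp_bound lam T s _ hlam hsR hdwell2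
    set E := Real.exp (lam * ((s : ℝ) * T)) with hE
    have hEpos : 0 < E := Real.exp_pos _
    have h1' : (s : ℝ) * (V1 - c * ι 1) ≤ c * ι s * E := by
      have := (div_le_iff₀ (by positivity : (0:ℝ) < c * ι s)).mp h1
      linarith
    have hexp : Real.exp (-lam * ((s : ℝ) * T)) = E⁻¹ := by
      rw [hE, ← Real.exp_neg]; ring_nf
    rw [hexp]
    rw [show (V1 - c * ι 1) * E⁻¹ = (V1 - c * ι 1) / E by rw [div_eq_mul_inv],
      div_le_div_iff₀ hEpos hsR]
    nlinarith
  -- each switching term bound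
  have hterm : ∀ j ∈ Finset.Icc 1 (s - 1),
      c * (ι j - ι (j + 1)) * Real.exp (-lam * (((s : ℝ) - j) * T)) ≤ c * ι s / s := by
    intro j hj
    simp only [Finset.mem_Icc] at hj
    obtain ⟨hj1, hj2⟩ := hj
    have hdiff : ι (j + 1) ≤ ι j := hιdec j hj1 hj2
    have hm : (0:ℝ) < (s : ℝ) - j := by
      have h : (j:ℝ) ≤ ((s-1 : ℕ) : ℝ) := by exact_mod_cast hj2
      rw [Nat.cast_sub (by omega)] at h; push_cast at h; linarith
    rcases eq_or_lt_of_le hdiff with heq | hlt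
    · rw [heq]
      simp only [sub_self, mul_zero, zero_mul]
      positivity
    · have hd := hdwell1 j hj1 hj2 hlt
      have h1 := aux_exp_bound lam T _ _ hlam hm hd
      set E := Real.exp (lam * (((s : ℝ) - j) * T)) with hE
      have hEpos : 0 < E := Real.exp_pos _
      have h1' : (s : ℝ) * (ι j - ι (j + 1)) ≤ ι s * E := by
        have := (div_le_iff₀ hιs).mp h1
        linarith
      have hexp : Real.exp (-lam * (((s : ℝ) - j) * T)) = E⁻¹ := by
        rw [hE, ← Real.exp_neg]; ring_nf
      rw [hexp]
      rw [show c * (ι j - ι (j + 1)) * E⁻¹ = c * (ι j - ι (j + 1)) / E by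
        rw [div_eq_mul_inv], div_le_div_iff₀ hEpos hsR]
      nlinarith
  have hsum : ∑ j ∈ Finset.Icc 1 (s - 1),
      c * (ι j - ι (j + 1)) * Real.exp (-lam * (((s : ℝ) - j) * T))
      ≤ ((s:ℝ) - 1) * (c * ι s / s) := by
    calc _ ≤ ∑ _j ∈ Finset.Icc 1 (s - 1), c * ι s / s := Finset.sum_le_sum hterm
      _ = ((s - 1 : ℕ) : ℝ) * (c * ι s / s) := by
          rw [Finset.sum_const, Nat.card_Icc]
          simp [nsmul_eq_mul]
      _ = ((s:ℝ) - 1) * (c * ι s / s) := by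
          rw [Nat.cast_sub (by omega)]; norm_num
  have hkey : c * ι s / s + ((s:ℝ) - 1) * (c * ι s / s) = c * ι s := by
    field_simp; ring
  linarith
end

section
/- Suppose a̲, k, k₁, α₁, Ȳ, F̄, Γ̄, Ā > 0 satisfy a̲ > 3Ȳ²/(kα₁) + 4F̄²/(kk₁) + 4kȲ²Γ̄²Ā²/k₁ and k₁ > 6Ȳ⁴Γ̄²/α₁. Then for all vectors θ̃ ∈ ℝᴾ, x̃, r ∈ ℝⁿ, matrices A (symmetric PSD, λ_min(A) ≥ a̲, ‖A‖ ≤ Ā), F with ‖F‖ ≤ F̄, Y with ‖Y‖ ≤ Ȳ, symmetric positive definite Γ with ‖Γ‖ ≤ Γ̄, vector Q ∈ ℝᴾ, and γ₁ ∈ [0,1], the expression D = -θ̃ᵀYᵀx̃ - kθ̃ᵀAθ̃ + kθ̃ᵀQ - α₁‖x̃‖² + rᵀFθ̃ - kγ₁rᵀYΓAθ̃ - γ₁rᵀYΓYᵀx̃ + kγ₁rᵀYΓQ - k₁‖r‖² satisfies D ≤ -(ka̲/4)‖θ̃‖² - (α₁/3)‖x̃‖² - (k₁/8)‖r‖² +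 (k/(2a̲) + k²Ȳ²Γ̄²/k₁)‖Q‖². -/
open Matrix

lemma dp_self_nonneg {m : ℕ} (a : Fin m → ℝ) : 0 ≤ a ⬝ᵥ a :=
  Finset.sum_nonneg fun _ _ => mul_self_nonneg _

lemma young_bd {m : ℕ} (a b : Fin m → ℝ) (ca cb ε : ℝ) (hε : 0 < ε)
    (ha : a ⬝ᵥ a ≤ ca) (hb : b ⬝ᵥ b ≤ cb) :
    a ⬝ᵥ b ≤ ε/2 * ca + 1/(2*ε) * cb := by
  have h0 : 0 ≤ (ε • a - b) ⬝ᵥ (ε • a - b) := dp_self_nonneg _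
  have expand : (ε • a - b) ⬝ᵥ (ε • a - b)
      = ε^2 * (a ⬝ᵥ a) - 2*ε*(a ⬝ᵥ b) + b ⬝ᵥ b := by
    simp only [dotProduct, Pi.sub_apply, Pi.smul_apply, smul_eq_mul,
      Finset.mul_sum, ← Finset.sum_add_distrib, ← Finset.sum_sub_distrib]
    exact Finset.sum_congr rfl fun i _ => by ring
  rw [expand] at h0
  have key : 2*ε*(a ⬝ᵥ b) ≤ ε^2 * ca + cb := by nlinarith [sq_nonneg ε]
  have h2 : (0:ℝ) < 2*ε := by linarith
  rw [← mul_le_mul_iff_right₀ h2]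
  calc 2*ε*(a ⬝ᵥ b) ≤ ε^2 * ca + cb := key
    _ = 2*ε*(ε/2 * ca + 1/(2*ε) * cb) := by field_simp

set_option maxHeartbeats 1000000 in
/-- Core completion-of-squares estimate in the proof of Lemma 1, bounding the
Lyapunov derivative along the closed-loop error dynamics. Operator-norm bounds
are encoded via their quadratic (Rayleigh) form using dot products. -/
theorem stmt_11 {n P : ℕ}
    (alo k k₁ α₁ Yb Fb Γb Ab γ₁ : ℝ)
    (halo : 0 < alo) (hk : 0 < k) (hk₁ : 0 < k₁) (hα₁ : 0 < α₁)
    (hYb : 0 < Yb) (hFb : 0 < Fb) (hΓb : 0 < Γb) (hAb : 0 < Ab)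
    (hγ₁ : γ₁ ∈ Set.Icc (0 : ℝ) 1)
    (hgain1 : 3 * Yb ^ 2 / (k * α₁) + 4 * Fb ^ 2 / (k * k₁) +
      4 * k * Yb ^ 2 * Γb ^ 2 * Ab ^ 2 / k₁ < alo)
    (hgain2 : 6 * Yb ^ 4 * Γb ^ 2 / α₁ < k₁)
    (θ : Fin P → ℝ) (x r : Fin n → ℝ)
    (A Γ : Matrix (Fin P) (Fin P) ℝ) (F Y : Matrix (Fin n) (Fin P) ℝ)
    (Q : Fin P → ℝ)
    (hA : A.PosSemidef)
    (hAmin : ∀ z : Fin P → ℝ, alo * (z ⬝ᵥ z) ≤ z ⬝ᵥ (A *ᵥ z))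
    (hAnorm : ∀ z : Fin P → ℝ, (A *ᵥ z) ⬝ᵥ (A *ᵥ z) ≤ Ab ^ 2 * (z ⬝ᵥ z))
    (hΓ : Γ.PosDef)
    (hΓnorm : ∀ z : Fin P → ℝ, (Γ *ᵥ z) ⬝ᵥ (Γ *ᵥ z) ≤ Γb ^ 2 * (z ⬝ᵥ z))
    (hFnorm : ∀ z : Fin P → ℝ, (F *ᵥ z) ⬝ᵥ (F *ᵥ z) ≤ Fb ^ 2 * (z ⬝ᵥ z))
    (hYnorm : ∀ z : Fin P → ℝ, (Y *ᵥ z) ⬝ᵥ (Y *ᵥ z) ≤ Yb ^ 2 * (z ⬝ᵥ z))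
    (hYTnorm : ∀ z : Fin n → ℝ, (Yᵀ *ᵥ z) ⬝ᵥ (Yᵀ *ᵥ z) ≤ Yb ^ 2 * (z ⬝ᵥ z))
    (D : ℝ)
    (hD : D = -((Y *ᵥ θ) ⬝ᵥ x) - k * (θ ⬝ᵥ (A *ᵥ θ)) + k * (θ ⬝ᵥ Q)
      - α₁ * (x ⬝ᵥ x) + r ⬝ᵥ (F *ᵥ θ)
      - k * γ₁ * (r ⬝ᵥ (Y *ᵥ (Γ *ᵥ (A *ᵥ θ))))
      - γ₁ * (r ⬝ᵥ (Y *ᵥ (Γ *ᵥ (Yᵀ *ᵥ x))))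
      + k * γ₁ * (r ⬝ᵥ (Y *ᵥ (Γ *ᵥ Q))) - k₁ * (r ⬝ᵥ r)) :
    D ≤ -(k * alo / 4) * (θ ⬝ᵥ θ) - (α₁ / 3) * (x ⬝ᵥ x) - (k₁ / 8) * (r ⬝ᵥ r)
      + (k / (2 * alo) + k ^ 2 * Yb ^ 2 * Γb ^ 2 / k₁) * (Q ⬝ᵥ Q) := by
  obtain ⟨hγ0, hγle⟩ := hγ₁
  have hθθ := dp_self_nonneg θ
  have hxx := dp_self_nonneg x
  have hrr := dp_self_nonneg r
  have hqq := dp_self_nonneg Q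
  -- gain conditions with denominators cleared
  have hg1' : 3*Yb^2*k₁ + 4*Fb^2*α₁ + 4*k^2*Yb^2*Γb^2*Ab^2*α₁ < alo*(k*α₁*k₁) := by
    have hpos : (0:ℝ) < k*α₁*k₁ := by positivity
    have h := mul_lt_mul_of_pos_right hgain1 hpos
    have e : (3 * Yb ^ 2 / (k * α₁) + 4 * Fb ^ 2 / (k * k₁) +
        4 * k * Yb ^ 2 * Γb ^ 2 * Ab ^ 2 / k₁) * (k*α₁*k₁)
        = 3*Yb^2*k₁ + 4*Fb^2*α₁ + 4*k^2*Yb^2*Γb^2*Ab^2*α₁ := by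
      field_simp
    rw [e] at h
    exact h
  have hg2' : 6*Yb^4*Γb^2 < k₁*α₁ := by
    have h := mul_lt_mul_of_pos_right hgain2 hα₁
    rw [div_mul_cancel₀ _ hα₁.ne'] at h
    exact h
  -- term 1 : -(Yθ)·x
  have h1 : -((Y *ᵥ θ) ⬝ᵥ x) ≤ 3*Yb^2/(4*α₁)*(θ ⬝ᵥ θ) + α₁/3*(x ⬝ᵥ x) := by
    have ha : (-(Y *ᵥ θ)) ⬝ᵥ (-(Y *ᵥ θ)) ≤ Yb^2 * (θ ⬝ᵥ θ) := by
      simpa [neg_dotProduct, dotProduct_neg] using hYnorm θ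
    have h := young_bd (-(Y *ᵥ θ)) x (Yb^2*(θ ⬝ᵥ θ)) (x ⬝ᵥ x)
      (3/(2*α₁)) (by positivity) ha le_rfl
    rw [neg_dotProduct] at h
    have e : (3/(2*α₁))/2 * (Yb^2*(θ ⬝ᵥ θ)) + 1/(2*(3/(2*α₁))) * (x ⬝ᵥ x)
        = 3*Yb^2/(4*α₁)*(θ ⬝ᵥ θ) + α₁/3*(x ⬝ᵥ x) := by field_simp; ring
    linarith [e.le, e.ge]
  -- term 2 : -k θᵀAθ
  have h2 : k*(alo*(θ ⬝ᵥ θ)) ≤ k*(θ ⬝ᵥ (A *ᵥ θ)) :=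
    mul_le_mul_of_nonneg_left (hAmin θ) hk.le
  -- term 3 : k θ·Q
  have h3 : k*(θ ⬝ᵥ Q) ≤ k*(alo/2*(θ ⬝ᵥ θ) + 1/(2*alo)*(Q ⬝ᵥ Q)) :=
    mul_le_mul_of_nonneg_left
      (young_bd θ Q (θ ⬝ᵥ θ) (Q ⬝ᵥ Q) alo halo le_rfl le_rfl) hk.le
  -- term 5 : r·Fθ
  have h5 : r ⬝ᵥ (F *ᵥ θ) ≤ k₁/4*(r ⬝ᵥ r) + Fb^2/k₁*(θ ⬝ᵥ θ) := by
    have h := young_bd r (F *ᵥ θ) (r ⬝ᵥ r) (Fb^2*(θ ⬝ᵥ θ))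
      (k₁/2) (by positivity) le_rfl (hFnorm θ)
    have e : (k₁/2)/2 * (r ⬝ᵥ r) + 1/(2*(k₁/2)) * (Fb^2*(θ ⬝ᵥ θ))
        = k₁/4*(r ⬝ᵥ r) + Fb^2/k₁*(θ ⬝ᵥ θ) := by field_simp; ring
    linarith [e.le, e.ge]
  -- term 6 : -kγ₁ r·YΓAθ
  have hw6 : (Y *ᵥ (Γ *ᵥ (A *ᵥ θ))) ⬝ᵥ (Y *ᵥ (Γ *ᵥ (A *ᵥ θ)))
      ≤ Yb^2*(Γb^2*(Ab^2*(θ ⬝ᵥ θ))) := by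
    calc (Y *ᵥ (Γ *ᵥ (A *ᵥ θ))) ⬝ᵥ (Y *ᵥ (Γ *ᵥ (A *ᵥ θ)))
        ≤ Yb^2 * ((Γ *ᵥ (A *ᵥ θ)) ⬝ᵥ (Γ *ᵥ (A *ᵥ θ))) := hYnorm _
      _ ≤ Yb^2 * (Γb^2 * ((A *ᵥ θ) ⬝ᵥ (A *ᵥ θ))) :=
          mul_le_mul_of_nonneg_left (hΓnorm _) (sq_nonneg Yb)
      _ ≤ Yb^2*(Γb^2*(Ab^2*(θ ⬝ᵥ θ))) :=
          mul_le_mul_of_nonneg_left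
            (mul_le_mul_of_nonneg_left (hAnorm θ) (sq_nonneg Γb)) (sq_nonneg Yb)
  have hγsq : γ₁*γ₁ ≤ 1 := by nlinarith
  have h6 : -(k * γ₁ * (r ⬝ᵥ (Y *ᵥ (Γ *ᵥ (A *ᵥ θ)))))
      ≤ k₁/4*(r ⬝ᵥ r) + k^2*Yb^2*Γb^2*Ab^2/k₁*(θ ⬝ᵥ θ) := by
    have hb : ((-(k*γ₁)) • (Y *ᵥ (Γ *ᵥ (A *ᵥ θ)))) ⬝ᵥ
        ((-(k*γ₁)) • (Y *ᵥ (Γ *ᵥ (A *ᵥ θ)))) ≤ k^2*Yb^2*Γb^2*Ab^2*(θ ⬝ᵥ θ) := by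
      rw [smul_dotProduct, dotProduct_smul, smul_eq_mul, smul_eq_mul]
      have hcc : (k*γ₁)*(k*γ₁) ≤ k^2 := by nlinarith
      have key := mul_le_mul hcc hw6 (dp_self_nonneg (Y *ᵥ (Γ *ᵥ (A *ᵥ θ)))) (sq_nonneg k)
      linarith [key]
    have h := young_bd r ((-(k*γ₁)) • (Y *ᵥ (Γ *ᵥ (A *ᵥ θ)))) (r ⬝ᵥ r)
      (k^2*Yb^2*Γb^2*Ab^2*(θ ⬝ᵥ θ)) (k₁/2) (by positivity) le_rfl hb
    rw [dotProduct_smul, smul_eq_mul] at h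
    have e : (k₁/2)/2 * (r ⬝ᵥ r) + 1/(2*(k₁/2)) * (k^2*Yb^2*Γb^2*Ab^2*(θ ⬝ᵥ θ))
        = k₁/4*(r ⬝ᵥ r) + k^2*Yb^2*Γb^2*Ab^2/k₁*(θ ⬝ᵥ θ) := by field_simp; ring
    have e2 : -(k*γ₁) * (r ⬝ᵥ (Y *ᵥ (Γ *ᵥ (A *ᵥ θ))))
        = -(k * γ₁ * (r ⬝ᵥ (Y *ᵥ (Γ *ᵥ (A *ᵥ θ))))) := by ring
    linarith [e.le, e.ge, e2.le, e2.ge]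
  -- term 7 : -γ₁ r·YΓYᵀx
  have hw7 : (Y *ᵥ (Γ *ᵥ (Yᵀ *ᵥ x))) ⬝ᵥ (Y *ᵥ (Γ *ᵥ (Yᵀ *ᵥ x)))
      ≤ Yb^2*(Γb^2*(Yb^2*(x ⬝ᵥ x))) := by
    calc (Y *ᵥ (Γ *ᵥ (Yᵀ *ᵥ x))) ⬝ᵥ (Y *ᵥ (Γ *ᵥ (Yᵀ *ᵥ x)))
        ≤ Yb^2 * ((Γ *ᵥ (Yᵀ *ᵥ x)) ⬝ᵥ (Γ *ᵥ (Yᵀ *ᵥ x))) := hYnorm _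
      _ ≤ Yb^2 * (Γb^2 * ((Yᵀ *ᵥ x) ⬝ᵥ (Yᵀ *ᵥ x))) :=
          mul_le_mul_of_nonneg_left (hΓnorm _) (sq_nonneg Yb)
      _ ≤ Yb^2*(Γb^2*(Yb^2*(x ⬝ᵥ x))) :=
          mul_le_mul_of_nonneg_left
            (mul_le_mul_of_nonneg_left (hYTnorm x) (sq_nonneg Γb)) (sq_nonneg Yb)
  have h7 : -(γ₁ * (r ⬝ᵥ (Y *ᵥ (Γ *ᵥ (Yᵀ *ᵥ x)))))
      ≤ k₁/8*(r ⬝ᵥ r) + α₁/3*(x ⬝ᵥ x) := by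
    have hb : ((-γ₁) • (Y *ᵥ (Γ *ᵥ (Yᵀ *ᵥ x)))) ⬝ᵥ
        ((-γ₁) • (Y *ᵥ (Γ *ᵥ (Yᵀ *ᵥ x)))) ≤ Yb^4*Γb^2*(x ⬝ᵥ x) := by
      rw [smul_dotProduct, dotProduct_smul, smul_eq_mul, smul_eq_mul]
      have key := mul_le_mul hγsq hw7 (dp_self_nonneg (Y *ᵥ (Γ *ᵥ (Yᵀ *ᵥ x)))) zero_le_one
      linarith [key]
    have h := young_bd r ((-γ₁) • (Y *ᵥ (Γ *ᵥ (Yᵀ *ᵥ x)))) (r ⬝ᵥ r)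
      (Yb^4*Γb^2*(x ⬝ᵥ x)) (k₁/4) (by positivity) le_rfl hb
    rw [dotProduct_smul, smul_eq_mul] at h
    have e : (k₁/4)/2 * (r ⬝ᵥ r) + 1/(2*(k₁/4)) * (Yb^4*Γb^2*(x ⬝ᵥ x))
        = k₁/8*(r ⬝ᵥ r) + 2*Yb^4*Γb^2/k₁*(x ⬝ᵥ x) := by field_simp; ring
    have hc : 2*Yb^4*Γb^2/k₁ ≤ α₁/3 := by
      rw [div_le_div_iff₀ hk₁ (by norm_num)]
      nlinarith
    have hcx := mul_le_mul_of_nonneg_right hc hxx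
    have e2 : (-γ₁) * (r ⬝ᵥ (Y *ᵥ (Γ *ᵥ (Yᵀ *ᵥ x))))
        = -(γ₁ * (r ⬝ᵥ (Y *ᵥ (Γ *ᵥ (Yᵀ *ᵥ x))))) := by ring
    linarith [e.le, e.ge, e2.le, e2.ge]
  -- term 8 : kγ₁ r·YΓQ
  have hw8 : (Y *ᵥ (Γ *ᵥ Q)) ⬝ᵥ (Y *ᵥ (Γ *ᵥ Q)) ≤ Yb^2*(Γb^2*(Q ⬝ᵥ Q)) := by
    calc (Y *ᵥ (Γ *ᵥ Q)) ⬝ᵥ (Y *ᵥ (Γ *ᵥ Q))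
        ≤ Yb^2 * ((Γ *ᵥ Q) ⬝ᵥ (Γ *ᵥ Q)) := hYnorm _
      _ ≤ Yb^2*(Γb^2*(Q ⬝ᵥ Q)) :=
          mul_le_mul_of_nonneg_left (hΓnorm Q) (sq_nonneg Yb)
  have h8 : k * γ₁ * (r ⬝ᵥ (Y *ᵥ (Γ *ᵥ Q)))
      ≤ k₁/4*(r ⬝ᵥ r) + k^2*Yb^2*Γb^2/k₁*(Q ⬝ᵥ Q) := by
    have hb : ((k*γ₁) • (Y *ᵥ (Γ *ᵥ Q))) ⬝ᵥ ((k*γ₁) • (Y *ᵥ (Γ *ᵥ Q)))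
        ≤ k^2*Yb^2*Γb^2*(Q ⬝ᵥ Q) := by
      rw [smul_dotProduct, dotProduct_smul, smul_eq_mul, smul_eq_mul]
      have hcc : (k*γ₁)*(k*γ₁) ≤ k^2 := by nlinarith
      have key := mul_le_mul hcc hw8 (dp_self_nonneg (Y *ᵥ (Γ *ᵥ Q))) (sq_nonneg k)
      linarith [key]
    have h := young_bd r ((k*γ₁) • (Y *ᵥ (Γ *ᵥ Q))) (r ⬝ᵥ r)
      (k^2*Yb^2*Γb^2*(Q ⬝ᵥ Q)) (k₁/2) (by positivity) le_rfl hb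
    rw [dotProduct_smul, smul_eq_mul] at h
    have e : (k₁/2)/2 * (r ⬝ᵥ r) + 1/(2*(k₁/2)) * (k^2*Yb^2*Γb^2*(Q ⬝ᵥ Q))
        = k₁/4*(r ⬝ᵥ r) + k^2*Yb^2*Γb^2/k₁*(Q ⬝ᵥ Q) := by field_simp; ring
    have e2 : (k*γ₁) * (r ⬝ᵥ (Y *ᵥ (Γ *ᵥ Q))) = k * γ₁ * (r ⬝ᵥ (Y *ᵥ (Γ *ᵥ Q))) := by ring
    linarith [e.le, e.ge, e2.le, e2.ge]
  -- θ coefficient combination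
  have hθc : 3*Yb^2/(4*α₁)*(θ ⬝ᵥ θ) + k*alo/2*(θ ⬝ᵥ θ) + Fb^2/k₁*(θ ⬝ᵥ θ)
      + k^2*Yb^2*Γb^2*Ab^2/k₁*(θ ⬝ᵥ θ) - k*alo*(θ ⬝ᵥ θ)
      ≤ -(k * alo / 4)*(θ ⬝ᵥ θ) := by
    have hcoef : 3*Yb^2/(4*α₁) + k*alo/2 + Fb^2/k₁ + k^2*Yb^2*Γb^2*Ab^2/k₁ - k*alo
        ≤ -(k * alo / 4) := by
      rw [← sub_nonneg]
      have e : -(k * alo / 4) - (3*Yb^2/(4*α₁) + k*alo/2 + Fb^2/k₁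
          + k^2*Yb^2*Γb^2*Ab^2/k₁ - k*alo)
          = (alo*(k*α₁*k₁) - (3*Yb^2*k₁ + 4*Fb^2*α₁ + 4*k^2*Yb^2*Γb^2*Ab^2*α₁))
            / (4*α₁*k₁) := by field_simp; ring
      rw [e]
      apply div_nonneg (by linarith) (by positivity)
    linarith [mul_le_mul_of_nonneg_right hcoef hθθ]
  rw [hD]
  ring_nf at h1 h2 h3 h5 h6 h7 h8 hθc ⊢
  linarith [h1, h2, h3, h5, h6, h7, h8, hθc]
end

section
/- Let (b_s)_{s≥1} be a sequence of nonnegative reals with b_s → 0, and suppose a function V : ℝ_{≥0} → ℝ_{≥0} satisfies: for every s, V(t) ≤ W_s(t) for t ∈ [T_{s-1}, T_s) where W_s(t) = (V̄₁ - b₁) e^{-λ t} + b_s + Σ_{j=1}^{s-1} (b_j - b_{j+1}) e^{-λ(t - T_j)}, with (b_j) strictly decreasing, λ > 0, V̄₁ > b₁, T₀ = 0, and T_s → ∞. Then V(t) → 0 as t → ∞. -/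
open Filter

/-- Abstraction of the conclusion of Theorem 1: the switched Lyapunov envelope
with strictly decreasing, vanishing offsets and unbounded switching times forces
the common Lyapunov function to converge to zero. -/
theorem stmt_15 (b : ℕ → ℝ) (lam V1 : ℝ) (T : ℕ → ℝ) (V : ℝ → ℝ)
    (hbnn : ∀ s, 1 ≤ s → 0 ≤ b s)
    (hbdec : ∀ s, 1 ≤ s → b (s + 1) < b s)
    (hb0 : Tendsto b atTop (nhds 0))
    (hlam : 0 < lam) (hV1 : b 1 < V1)
    (hT0 : T 0 = 0) (hTmono : Monotone T) (hTtop : Tendsto T atTop atTop)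
    (hVnn : ∀ t, 0 ≤ t → 0 ≤ V t)
    (henv : ∀ s, 1 ≤ s → ∀ t ∈ Set.Ico (T (s - 1)) (T s),
      V t ≤ (V1 - b 1) * Real.exp (-lam * t) + b s +
        ∑ j ∈ Finset.Icc 1 (s - 1), (b j - b (j + 1)) * Real.exp (-lam * (t - T j))) :
    Tendsto V atTop (nhds 0) := by
  -- b is antitone on [1, ∞)
  have hbmono : ∀ m s : ℕ, 1 ≤ m → m ≤ s → b s ≤ b m := by
    intro m s hm hms
    induction hms with
    | refl => exact le_rfl
    | step h ih =>
        rename_i k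
        exact le_trans (le_of_lt (hbdec k (le_trans hm h))) ih
  -- telescoping sum
  have htel : ∀ m k : ℕ, m ≤ k →
      ∑ j ∈ Finset.Ioc m k, (b j - b (j + 1)) = b (m + 1) - b (k + 1) := by
    intro m k hmk
    induction hmk with
    | refl => simp
    | step h ih =>
        rw [Finset.sum_Ioc_succ_top h, ih]
        ring
  rw [Metric.tendsto_atTop]
  intro ε hε
  have hε4 : (0:ℝ) < ε / 4 := by linarith
  -- choose m with b (m+1) < ε/4
  obtain ⟨m0, hm0⟩ := (eventually_atTop).mp (hb0.eventually (gt_mem_nhds hε4))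
  set m : ℕ := max m0 1 with hm_def
  have hm1 : 1 ≤ m := le_max_right _ _
  have hbm : b (m + 1) < ε / 4 := hm0 (m + 1) (by omega)
  have hTm0 : 0 ≤ T m := hT0 ▸ hTmono (Nat.zero_le m)
  set C : ℝ := max (V1 - b 1) (b 1) with hC_def
  have hb1nn : 0 ≤ b 1 := hbnn 1 le_rfl
  have hC : 0 < C := lt_of_lt_of_le (by linarith) (le_max_left _ _)
  -- exp(-lam*(t - T m)) → 0
  have hexp : Tendsto (fun t : ℝ => Real.exp (-lam * (t - T m))) atTop (nhds 0) := by
    apply Real.tendsto_exp_atBot.comp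
    have h : Tendsto (fun t : ℝ => t - T m) atTop atTop :=
      tendsto_atTop_add_const_right _ (-(T m)) tendsto_id
    exact h.const_mul_atTop_of_neg (by linarith)
  have hδ : (0:ℝ) < ε / (4 * C) := by positivity
  obtain ⟨t0, ht0⟩ := (eventually_atTop).mp (hexp.eventually (gt_mem_nhds hδ))
  refine ⟨max t0 (T m), fun t ht => ?_⟩
  have htt0 : t0 ≤ t := le_trans (le_max_left _ _) ht
  have htTm : T m ≤ t := le_trans (le_max_right _ _) ht
  have htnn : 0 ≤ t := le_trans hTm0 htTm
  have hE : Real.exp (-lam * (t - T m)) < ε / (4 * C) := ht0 t htt0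
  have hEnn : 0 ≤ Real.exp (-lam * (t - T m)) := (Real.exp_pos _).le
  -- find s with t ∈ [T (s-1), T s)
  obtain ⟨s, hs1, htlo, hts⟩ : ∃ s : ℕ, 1 ≤ s ∧ T (s - 1) ≤ t ∧ t < T s := by
    have hex : ∃ n, t < T n := by
      obtain ⟨n, hn⟩ := (tendsto_atTop.mp hTtop (t + 1)).exists
      exact ⟨n, by linarith⟩
    classical
    refine ⟨Nat.find hex, ?_, ?_, Nat.find_spec hex⟩
    · rcases Nat.eq_zero_or_pos (Nat.find hex) with h | h
      · exact absurd (Nat.find_spec hex) (by rw [h, hT0]; exact not_lt.mpr htnn)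
      · exact h
    · by_contra h
      have h1 : 0 < Nat.find hex := by
        rcases Nat.eq_zero_or_pos (Nat.find hex) with h0 | h0
        · exact absurd (Nat.find_spec hex) (by rw [h0, hT0]; exact not_lt.mpr htnn)
        · exact h0
      exact Nat.find_min hex (show Nat.find hex - 1 < Nat.find hex by omega) (lt_of_not_ge h)
  have hms : m ≤ s - 1 := by
    by_contra h
    have : s ≤ m := by omega
    exact absurd hts (not_lt.mpr (le_trans (hTmono this) htTm))
  -- apply the envelope
  have hV := henv s hs1 t ⟨htlo, hts⟩
  -- split the sum
  have hIcc : Finset.Icc 1 (s - 1) = Finset.Ioc 0 (s - 1) := by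
    rw [← Finset.Icc_add_one_left_eq_Ioc]; rfl
  have hsplit : (∑ j ∈ Finset.Ioc 0 m, (b j - b (j + 1)) * Real.exp (-lam * (t - T j))) +
      (∑ j ∈ Finset.Ioc m (s - 1), (b j - b (j + 1)) * Real.exp (-lam * (t - T j))) =
      ∑ j ∈ Finset.Ioc 0 (s - 1), (b j - b (j + 1)) * Real.exp (-lam * (t - T j)) :=
    Finset.sum_Ioc_consecutive _ (Nat.zero_le m) hms
  -- bound the first part
  have hS1 : (∑ j ∈ Finset.Ioc 0 m, (b j - b (j + 1)) * Real.exp (-lam * (t - T j)))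
      ≤ b 1 * Real.exp (-lam * (t - T m)) := by
    have step : (∑ j ∈ Finset.Ioc 0 m, (b j - b (j + 1)) * Real.exp (-lam * (t - T j)))
        ≤ ∑ j ∈ Finset.Ioc 0 m, (b j - b (j + 1)) * Real.exp (-lam * (t - T m)) := by
      apply Finset.sum_le_sum
      intro j hj
      rw [Finset.mem_Ioc] at hj
      have hbj : 0 ≤ b j - b (j + 1) := le_of_lt (sub_pos.mpr (hbdec j hj.1))
      apply mul_le_mul_of_nonneg_left _ hbj
      apply Real.exp_le_exp.mpr
      have h1 : lam * T j ≤ lam * T m := mul_le_mul_of_nonneg_left (hTmono hj.2) hlam.le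
      have h2 : -lam * (t - T j) = -lam * t + lam * T j := by ring
      have h3 : -lam * (t - T m) = -lam * t + lam * T m := by ring
      linarith
    rw [← Finset.sum_mul, htel 0 m (Nat.zero_le m)] at step
    have hbm1 : 0 ≤ b (m + 1) := hbnn (m + 1) (by omega)
    nlinarith
  -- bound the second part
  have hS2 : (∑ j ∈ Finset.Ioc m (s - 1), (b j - b (j + 1)) * Real.exp (-lam * (t - T j)))
      ≤ b (m + 1) - b s := by
    have step : (∑ j ∈ Finset.Ioc m (s - 1), (b j - b (j + 1)) * Real.exp (-lam * (t - T j)))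
        ≤ ∑ j ∈ Finset.Ioc m (s - 1), (b j - b (j + 1)) := by
      apply Finset.sum_le_sum
      intro j hj
      rw [Finset.mem_Ioc] at hj
      have hbj : 0 ≤ b j - b (j + 1) := le_of_lt (sub_pos.mpr (hbdec j (by omega)))
      have hTj : T j ≤ t := le_trans (hTmono hj.2) htlo
      have hexp1 : Real.exp (-lam * (t - T j)) ≤ 1 := by
        rw [← Real.exp_zero]
        apply Real.exp_le_exp.mpr
        have h1 : 0 ≤ lam * (t - T j) := mul_nonneg hlam.le (by linarith)
        linarith
      have hEj : 0 ≤ Real.exp (-lam * (t - T j)) := (Real.exp_pos _).le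
      nlinarith [mul_le_mul_of_nonneg_left hexp1 hbj]
    rw [htel m (s - 1) hms] at step
    have : s - 1 + 1 = s := by omega
    rwa [this] at step
  -- assemble the bounds
  have hbs : b s ≤ b (m + 1) := hbmono (m + 1) s (by omega) (by omega)
  have hbsnn : 0 ≤ b s := hbnn s hs1
  have hA : (V1 - b 1) * Real.exp (-lam * t) ≤ C * Real.exp (-lam * (t - T m)) := by
    apply mul_le_mul (le_max_left _ _) _ (Real.exp_pos _).le hC.le
    apply Real.exp_le_exp.mpr
    have h1 : 0 ≤ lam * T m := mul_nonneg hlam.le hTm0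
    have h2 : -lam * (t - T m) = -lam * t + lam * T m := by ring
    linarith
  have hB1C : b 1 * Real.exp (-lam * (t - T m)) ≤ C * Real.exp (-lam * (t - T m)) :=
    mul_le_mul_of_nonneg_right (le_max_right _ _) hEnn
  have hCE : C * Real.exp (-lam * (t - T m)) < ε / 4 := by
    have := (mul_lt_mul_iff_right₀ hC).mpr hE
    rw [show C * (ε / (4 * C)) = ε / 4 by field_simp] at this
    exact this
  rw [hIcc, ← hsplit] at hV
  have hVt : V t < ε := by
    have hS1' : (∑ j ∈ Finset.Ioc 0 m, (b j - b (j + 1)) * Real.exp (-lam * (t - T j)))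
        < ε / 4 := lt_of_le_of_lt (le_trans hS1 hB1C) hCE
    have hA' : (V1 - b 1) * Real.exp (-lam * t) < ε / 4 := lt_of_le_of_lt hA hCE
    linarith
  rw [Real.dist_eq, sub_zero, abs_of_nonneg (hVnn t htnn)]
  exact hVt
end
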